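/- Let Q be a finite quiver whose underlying graph is a tree, and let q: Q₁ → k∖{0} be any function with nonzero values. Then the generalized preprojective algebra Λ_{Q,q} = kQ̄/⟨ρ_q⟩, where ρ_q = Σ_{α∈Q₁}(α*α − q(α)·αα*), is isomorphic as a k-algebra to the ordinary preprojective algebra Λ_{Q,1} = kQ̄/⟨ρ⟩ with ρ = Σ_{α∈Q₁}(α*α − αα*). -/
import Mathlib


/-!
Path algebra of the doubled quiver `Q̄` of a finite quiver `Q`, presented as a
quotient of the free algebra on generators: one idempotent generator for each
vertex, one generator for each arrow `α` of `Q` and one generator for each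
reversed arrow `α*`.  The product `x * y` corresponds to the path `y` followed
by the path `x` (so `e_{t α} * α = α = α * e_{s α}`).
-/

/-- Generators: vertex idempotents, arrows and reversed arrows. -/
inductive DGen (V E : Type) : Type
  | vertex : V → DGen V E
  | arr : E → DGen V E
  | star : E → DGen V E

noncomputable section

namespace PP

variable (k V E : Type) [Field k] [Fintype V] [DecidableEq V] [Fintype E] (s t : E → V)

/-- The free algebra on the generators of the doubled quiver. -/
abbrev FA := FreeAlgebra k (DGen V E)

/-- The idempotent generator at a vertex. -/
def ve (i : V) : FA k V E := FreeAlgebra.ι k (DGen.vertex i)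
/-- The generator corresponding to an arrow `α : s α → t α` of `Q`. -/
def ag (a : E) : FA k V E := FreeAlgebra.ι k (DGen.arr a)
/-- The generator corresponding to the reversed arrow `α* : t α → s α`. -/
def sg (a : E) : FA k V E := FreeAlgebra.ι k (DGen.star a)

/-- The defining relations of the path algebra `k Q̄` of the doubled quiver. -/
inductive Rel : FA k V E → FA k V E → Prop
  | vertex_mul (i j : V) :
      Rel (ve k V E i * ve k V E j) (if i = j then ve k V E i else 0)
  | sum_vertex : Rel (∑ i : V, ve k V E i) 1
  | arr_left (a : E) (j : V) :
      Rel (ve k V E j * ag k V E a) (if j = t a then ag k V E a else 0)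
  | arr_right (a : E) (j : V) :
      Rel (ag k V E a * ve k V E j) (if j = s a then ag k V E a else 0)
  | star_left (a : E) (j : V) :
      Rel (ve k V E j * sg k V E a) (if j = s a then sg k V E a else 0)
  | star_right (a : E) (j : V) :
      Rel (sg k V E a * ve k V E j) (if j = t a then sg k V E a else 0)

/-- The path algebra `k Q̄` of the doubled quiver. -/
abbrev PathAlg := RingQuot (Rel k V E s t)

/-- The idempotent `e_i` of `k Q̄` at the vertex `i`. -/
def idem (i : V) : PathAlg k V E s t := RingQuot.mkAlgHom k (Rel k V E s t) (ve k V E i)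
/-- The arrow `α` as an element of `k Q̄`. -/
def arrow (a : E) : PathAlg k V E s t := RingQuot.mkAlgHom k (Rel k V E s t) (ag k V E a)
/-- The reversed arrow `α*` as an element of `k Q̄`. -/
def star (a : E) : PathAlg k V E s t := RingQuot.mkAlgHom k (Rel k V E s t) (sg k V E a)

/-- `ρ = Σ_{α ∈ Q₁} (α*α − αα*)` (note `α*α` is the loop at `s α` and `αα*` the
loop at `t α`). -/
def rho : PathAlg k V E s t :=
  ∑ a : E, (star k V E s t a * arrow k V E s t a - arrow k V E s t a * star k V E s t a)

end PP
open PP in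
/-- The underlying (undirected simple) graph of the quiver. -/
def quiverGraph (V E : Type) (s t : E → V) : SimpleGraph V :=
  SimpleGraph.fromRel (fun i j => ∃ a : E, s a = i ∧ t a = j)
namespace PPAux
noncomputable section
attribute [local instance] Classical.propDecidable
set_option linter.unusedSectionVars false

open SimpleGraph

variable {k V E : Type} [Field k] [DecidableEq V] (s t : E → V) (q : E → k) (hq : ∀ a, q a ≠ 0)

/-- Weight of a dart of the underlying graph. -/
def dw (x y : V) : kˣ :=
  if h : ∃ a, s a = x ∧ t a = y then Units.mk0 (q h.choose) (hq _)
  else if h' : ∃ a, s a = y ∧ t a = x then (Units.mk0 (q h'.choose) (hq _))⁻¹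
  else 1

lemma dw_arrow (hnomult : ∀ a b : E, (s a = s b ∧ t a = t b) ∨ (s a = t b ∧ t a = s b) → a = b)
    (a : E) : dw s t q hq (s a) (t a) = Units.mk0 (q a) (hq a) := by
  have h : ∃ b, s b = s a ∧ t b = t a := ⟨a, rfl, rfl⟩
  rw [dw, dif_pos h]
  have hc : h.choose = a := hnomult _ _ (Or.inl h.choose_spec)
  apply Units.ext
  simp only [Units.val_mk0]
  rw [hc]

lemma dw_symm (hnoloop : ∀ a : E, s a ≠ t a)
    (hnomult : ∀ a b : E, (s a = s b ∧ t a = t b) ∨ (s a = t b ∧ t a = s b) → a = b)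
    {x y : V} (hxy : x ≠ y) : dw s t q hq y x = (dw s t q hq x y)⁻¹ := by
  by_cases h : ∃ a, s a = x ∧ t a = y
  · have h2 : ¬ ∃ a, s a = y ∧ t a = x := by
      rintro ⟨b, hb1, hb2⟩
      obtain ⟨a0, ha1, ha2⟩ := h
      have hab : a0 = b := hnomult _ _ (Or.inr ⟨ha1.trans hb2.symm, ha2.trans hb1.symm⟩)
      rw [hab] at ha1
      exact hxy (ha1.symm.trans hb1)
    rw [dw, dw, dif_neg h2, dif_pos h, dif_pos h]
  · by_cases h2 : ∃ a, s a = y ∧ t a = x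
    · rw [dw, dw, dif_pos h2, dif_neg h, dif_pos h2, inv_inv]
    · rw [dw, dw, dif_neg h2, dif_neg h, dif_neg h, dif_neg h2, inv_one]

/-- Weight of a walk. -/
def wt {x y : V} (p : (quiverGraph V E s t).Walk x y) : kˣ :=
  (p.darts.map (fun d => dw s t q hq d.fst d.snd)).prod

lemma wt_nil {x : V} : wt s t q hq (Walk.nil : (quiverGraph V E s t).Walk x x) = 1 := rfl

lemma wt_append {x y z : V} (p : (quiverGraph V E s t).Walk x y)
    (p' : (quiverGraph V E s t).Walk y z) :
    wt s t q hq (p.append p') = wt s t q hq p * wt s t q hq p' := by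
  simp [wt, Walk.darts_append]

lemma wt_cons {x y z : V} (h : (quiverGraph V E s t).Adj x y)
    (p : (quiverGraph V E s t).Walk y z) :
    wt s t q hq (Walk.cons h p) = dw s t q hq x y * wt s t q hq p := by
  simp [wt, Walk.darts_cons]

lemma wt_concat {x y z : V} (p : (quiverGraph V E s t).Walk x y)
    (h : (quiverGraph V E s t).Adj y z) :
    wt s t q hq (p.concat h) = wt s t q hq p * dw s t q hq y z := by
  rw [Walk.concat_eq_append, wt_append, wt_cons, wt_nil, mul_one]

include hq in
lemma exists_d (htree : (quiverGraph V E s t).IsTree)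
    (hnoloop : ∀ a : E, s a ≠ t a)
    (hnomult : ∀ a b : E, (s a = s b ∧ t a = t b) ∨ (s a = t b ∧ t a = s b) → a = b) :
    ∃ d : V → kˣ, ∀ a : E, (d (t a) : k) = q a * (d (s a) : k) := by
  obtain ⟨r⟩ := htree.isConnected.nonempty
  have hup := htree.existsUnique_path
  let P : ∀ i, (quiverGraph V E s t).Walk r i := fun i => (hup r i).choose
  have hP : ∀ i, (P i).IsPath := fun i => (hup r i).choose_spec.1
  refine ⟨fun i => wt s t q hq (P i), fun a => ?_⟩
  have huv : s a ≠ t a := hnoloop a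
  have adj : (quiverGraph V E s t).Adj (s a) (t a) := by
    rw [quiverGraph, SimpleGraph.fromRel_adj]
    exact ⟨huv, Or.inl ⟨a, rfl, rfl⟩⟩
  have hdw : dw s t q hq (s a) (t a) = Units.mk0 (q a) (hq a) := dw_arrow s t q hq hnomult a
  suffices h : wt s t q hq (P (t a)) = Units.mk0 (q a) (hq a) * wt s t q hq (P (s a)) by
    have := congrArg (Units.val) h
    simpa using this
  by_cases hv : t a ∈ (P (s a)).support
  · have h1 : ((P (s a)).takeUntil (t a) hv).IsPath := (hP (s a)).takeUntil hv
    have h2 : ((P (s a)).dropUntil (t a) hv).IsPath := (hP (s a)).dropUntil hv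
    have e1 : (P (s a)).takeUntil (t a) hv = P (t a) := (hup r (t a)).unique h1 (hP (t a))
    have e2 : (P (s a)).dropUntil (t a) hv = Walk.cons adj.symm Walk.nil :=
      (hup (t a) (s a)).unique h2 (Path.singleton adj.symm).2
    have hw := congrArg (wt s t q hq) ((P (s a)).take_spec hv)
    rw [wt_append, e1, e2, wt_cons, wt_nil, mul_one,
      dw_symm s t q hq hnoloop hnomult huv, hdw] at hw
    rw [← hw, mul_comm, inv_mul_cancel_right]
  · have hpath : ((P (s a)).concat adj).IsPath := by
      rw [← Walk.isPath_reverse_iff, Walk.reverse_concat, Walk.cons_isPath_iff]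
      exact ⟨(hP (s a)).reverse, by simpa [Walk.support_reverse] using hv⟩
    have e : (P (s a)).concat adj = P (t a) := (hup r (t a)).unique hpath (hP (t a))
    rw [← e, wt_concat, hdw, mul_comm]

end
end PPAux


namespace PPAux2

open PP

variable (k V E : Type) [Field k] [Fintype V] [DecidableEq V] [Fintype E] (s t : E → V)

local notation "mk" => RingQuot.mkAlgHom k (Rel k V E s t)

lemma idem_mul (i j : V) :
    idem k V E s t i * idem k V E s t j = if i = j then idem k V E s t i else 0 := by
  have h : mk (ve k V E i * ve k V E j) = mk (if i = j then ve k V E i else 0) :=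
    RingQuot.mkAlgHom_rel k (Rel.vertex_mul i j)
  rw [map_mul, apply_ite mk, map_zero] at h
  exact h

lemma sum_idem : ∑ i : V, idem k V E s t i = 1 := by
  have h : mk (∑ i : V, ve k V E i) = mk 1 := RingQuot.mkAlgHom_rel k Rel.sum_vertex
  rw [map_sum, map_one] at h
  exact h

lemma idem_arrow (j : V) (a : E) :
    idem k V E s t j * arrow k V E s t a = if j = t a then arrow k V E s t a else 0 := by
  have h : mk (ve k V E j * ag k V E a) = mk (if j = t a then ag k V E a else 0) :=
    RingQuot.mkAlgHom_rel k (Rel.arr_left a j)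
  rw [map_mul, apply_ite mk, map_zero] at h
  exact h

lemma arrow_idem (j : V) (a : E) :
    arrow k V E s t a * idem k V E s t j = if j = s a then arrow k V E s t a else 0 := by
  have h : mk (ag k V E a * ve k V E j) = mk (if j = s a then ag k V E a else 0) :=
    RingQuot.mkAlgHom_rel k (Rel.arr_right a j)
  rw [map_mul, apply_ite mk, map_zero] at h
  exact h

lemma idem_star (j : V) (a : E) :
    idem k V E s t j * star k V E s t a = if j = s a then star k V E s t a else 0 := by
  have h : mk (ve k V E j * sg k V E a) = mk (if j = s a then sg k V E a else 0) :=
    RingQuot.mkAlgHom_rel k (Rel.star_left a j)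
  rw [map_mul, apply_ite mk, map_zero] at h
  exact h

lemma star_idem (j : V) (a : E) :
    star k V E s t a * idem k V E s t j = if j = t a then star k V E s t a else 0 := by
  have h : mk (sg k V E a * ve k V E j) = mk (if j = t a then sg k V E a else 0) :=
    RingQuot.mkAlgHom_rel k (Rel.star_right a j)
  rw [map_mul, apply_ite mk, map_zero] at h
  exact h

lemma idem_SA (i : V) (a : E) :
    idem k V E s t i * (star k V E s t a * arrow k V E s t a) * idem k V E s t i
      = if i = s a then star k V E s t a * arrow k V E s t a else 0 := by
  have h : idem k V E s t i * (star k V E s t a * arrow k V E s t a) * idem k V E s t i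
      = (idem k V E s t i * star k V E s t a) * (arrow k V E s t a * idem k V E s t i) := by
    simp only [mul_assoc]
  rw [h, idem_star, arrow_idem]
  split_ifs <;> simp

lemma idem_AS (i : V) (a : E) :
    idem k V E s t i * (arrow k V E s t a * star k V E s t a) * idem k V E s t i
      = if i = t a then arrow k V E s t a * star k V E s t a else 0 := by
  have h : idem k V E s t i * (arrow k V E s t a * star k V E s t a) * idem k V E s t i
      = (idem k V E s t i * arrow k V E s t a) * (star k V E s t a * idem k V E s t i) := by
    simp only [mul_assoc]
  rw [h, idem_arrow, star_idem]
  split_ifs <;> simp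

/-- The image of each generator under the rescaling map. -/
def sgen (c : E → k) : DGen V E → PathAlg k V E s t
  | .vertex i => idem k V E s t i
  | .arr a => c a • arrow k V E s t a
  | .star a => star k V E s t a

/-- The rescaling map on the free algebra. -/
def sfa (c : E → k) : FA k V E →ₐ[k] PathAlg k V E s t :=
  FreeAlgebra.lift k (sgen k V E s t c)

@[simp] lemma sfa_ι (c : E → k) (g : DGen V E) :
    sfa k V E s t c (FreeAlgebra.ι k g) = sgen k V E s t c g := by
  simp [sfa]

lemma sfa_compat (c : E → k) :
    ∀ ⦃x y⦄, Rel k V E s t x y → sfa k V E s t c x = sfa k V E s t c y := by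
  intro x y h
  induction h with
  | vertex_mul i j =>
      simp only [map_mul, ve, sfa_ι, sgen, idem_mul, apply_ite (sfa k V E s t c), map_zero]
  | sum_vertex =>
      simp only [map_sum, map_one, ve, sfa_ι, sgen, sum_idem]
  | arr_left a j =>
      simp only [map_mul, ve, ag, sfa_ι, sgen, mul_smul_comm, idem_arrow, smul_ite, smul_zero,
        apply_ite (sfa k V E s t c), map_zero]
  | arr_right a j =>
      simp only [map_mul, ve, ag, sfa_ι, sgen, smul_mul_assoc, arrow_idem, smul_ite, smul_zero,
        apply_ite (sfa k V E s t c), map_zero]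
  | star_left a j =>
      simp only [map_mul, ve, sg, sfa_ι, sgen, idem_star, apply_ite (sfa k V E s t c), map_zero]
  | star_right a j =>
      simp only [map_mul, ve, sg, sfa_ι, sgen, star_idem, apply_ite (sfa k V E s t c), map_zero]

/-- The rescaling endomorphism of the path algebra. -/
def scaleHom (c : E → k) : PathAlg k V E s t →ₐ[k] PathAlg k V E s t :=
  RingQuot.liftAlgHom k ⟨sfa k V E s t c, sfa_compat k V E s t c⟩

@[simp] lemma scaleHom_mk (c : E → k) (x : FA k V E) :
    scaleHom k V E s t c (mk x) = sfa k V E s t c x :=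
  RingQuot.liftAlgHom_mkAlgHom_apply _ _ _ _

@[simp] lemma scaleHom_idem (c : E → k) (i : V) :
    scaleHom k V E s t c (idem k V E s t i) = idem k V E s t i := by
  rw [idem, scaleHom_mk, ve, sfa_ι]; rfl

@[simp] lemma scaleHom_arrow (c : E → k) (a : E) :
    scaleHom k V E s t c (arrow k V E s t a) = c a • arrow k V E s t a := by
  rw [arrow, scaleHom_mk, ag, sfa_ι]; rfl

@[simp] lemma scaleHom_star (c : E → k) (a : E) :
    scaleHom k V E s t c (star k V E s t a) = star k V E s t a := by
  rw [PP.star, scaleHom_mk, sg, sfa_ι]; rfl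

/-- The relation defining the generalized preprojective algebra. -/
def relq (q : E → k) : PathAlg k V E s t → PathAlg k V E s t → Prop := fun x y =>
  x = ∑ a : E, (star k V E s t a * arrow k V E s t a -
    q a • (arrow k V E s t a * star k V E s t a)) ∧ y = 0

/-- The relation defining the ordinary preprojective algebra. -/
def rel1 : PathAlg k V E s t → PathAlg k V E s t → Prop := fun x y =>
  x = ∑ a : E, (star k V E s t a * arrow k V E s t a -
    arrow k V E s t a * star k V E s t a) ∧ y = 0

lemma pkey (w : E → k) (d : V → k) :
    ∑ a : E, (d (s a) • (star k V E s t a * arrow k V E s t a)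
        - (d (t a) * w a) • (arrow k V E s t a * star k V E s t a))
      = ∑ i : V, d i • (idem k V E s t i
          * (∑ a : E, (star k V E s t a * arrow k V E s t a
              - w a • (arrow k V E s t a * star k V E s t a)))
          * idem k V E s t i) := by
  have h1 : ∀ (i : V) (a : E), idem k V E s t i
      * (star k V E s t a * arrow k V E s t a
          - w a • (arrow k V E s t a * star k V E s t a))
      * idem k V E s t i
      = (if i = s a then star k V E s t a * arrow k V E s t a else 0)
        - w a • (if i = t a then arrow k V E s t a * star k V E s t a else 0) := by
    intro i a
    rw [mul_sub, sub_mul, mul_smul_comm, smul_mul_assoc, idem_SA, idem_AS]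
  have h2 : ∀ i : V, d i • (idem k V E s t i
      * (∑ a : E, (star k V E s t a * arrow k V E s t a
          - w a • (arrow k V E s t a * star k V E s t a)))
      * idem k V E s t i)
      = ∑ a : E, d i • ((if i = s a then star k V E s t a * arrow k V E s t a else 0)
          - w a • (if i = t a then arrow k V E s t a * star k V E s t a else 0)) := by
    intro i
    rw [Finset.mul_sum, Finset.sum_mul, ← Finset.smul_sum]
    exact congrArg (d i • ·) (Finset.sum_congr rfl fun a _ => h1 i a)
  rw [Finset.sum_congr rfl fun i (_ : i ∈ Finset.univ) => h2 i, Finset.sum_comm]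
  refine Finset.sum_congr rfl fun a _ => ?_
  simp [smul_sub, smul_ite, smul_zero, smul_smul, Finset.sum_sub_distrib, Finset.sum_ite_eq']

lemma keyzero (R : PathAlg k V E s t → PathAlg k V E s t → Prop) (w : E → k)
    (hR : RingQuot.mkAlgHom k R (∑ a : E, (star k V E s t a * arrow k V E s t a
        - w a • (arrow k V E s t a * star k V E s t a))) = 0)
    (d : V → k) :
    RingQuot.mkAlgHom k R (∑ a : E,
      (d (s a) • (star k V E s t a * arrow k V E s t a)
        - (d (t a) * w a) • (arrow k V E s t a * star k V E s t a))) = 0 := by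
  rw [pkey k V E s t w d, map_sum]
  refine Finset.sum_eq_zero fun i _ => ?_
  rw [map_smul, map_mul, map_mul, hR]
  exact (congrArg (d i • ·)
    ((congrArg (· * RingQuot.mkAlgHom k R (idem k V E s t i)) (mul_zero _)).trans
      (zero_mul _))).trans (smul_zero _)

lemma main_equiv (q : E → k) (hq : ∀ a : E, q a ≠ 0) (d : V → kˣ)
    (hd : ∀ a : E, ((d (t a) : k)) = q a * ((d (s a) : k))) :
    Nonempty (RingQuot (relq k V E s t q) ≃ₐ[k] RingQuot (rel1 k V E s t)) := by
  have hzq : RingQuot.mkAlgHom k (relq k V E s t q)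
      (∑ a : E, (star k V E s t a * arrow k V E s t a
        - q a • (arrow k V E s t a * star k V E s t a))) = 0 := by
    rw [RingQuot.mkAlgHom_rel k (show relq k V E s t q _ 0 from ⟨rfl, rfl⟩), map_zero]
  have hz1 : RingQuot.mkAlgHom k (rel1 k V E s t)
      (∑ a : E, (star k V E s t a * arrow k V E s t a
        - (1 : k) • (arrow k V E s t a * star k V E s t a))) = 0 := by
    simp only [one_smul]
    rw [RingQuot.mkAlgHom_rel k (show rel1 k V E s t _ 0 from ⟨rfl, rfl⟩), map_zero]
  set c : E → k := fun a => ((d (s a) : k)) with hc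
  set c' : E → k := fun a => ((d (s a) : k))⁻¹ with hc'
  have hFcompat : ∀ ⦃x y⦄, relq k V E s t q x y →
      ((RingQuot.mkAlgHom k (rel1 k V E s t)).comp (scaleHom k V E s t c)) x
        = ((RingQuot.mkAlgHom k (rel1 k V E s t)).comp (scaleHom k V E s t c)) y := by
    rintro x y ⟨rfl, rfl⟩
    rw [map_zero, AlgHom.comp_apply]
    have e1 : scaleHom k V E s t c (∑ a : E, (star k V E s t a * arrow k V E s t a
        - q a • (arrow k V E s t a * star k V E s t a)))
        = ∑ a : E, (((d (s a) : k)) • (star k V E s t a * arrow k V E s t a)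
            - (((d (t a) : k)) * 1) • (arrow k V E s t a * star k V E s t a)) := by
      rw [map_sum]
      refine Finset.sum_congr rfl fun a _ => ?_
      simp only [map_sub, map_mul, map_smul, scaleHom_arrow, scaleHom_star,
        mul_smul_comm, smul_mul_assoc, smul_smul, hc]
      rw [mul_one, hd a]
    rw [e1]
    exact keyzero k V E s t (rel1 k V E s t) (fun _ => 1) hz1 (fun i => ((d i : k)))
  have hGcompat : ∀ ⦃x y⦄, rel1 k V E s t x y →
      ((RingQuot.mkAlgHom k (relq k V E s t q)).comp (scaleHom k V E s t c')) x
        = ((RingQuot.mkAlgHom k (relq k V E s t q)).comp (scaleHom k V E s t c')) y := by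
    rintro x y ⟨rfl, rfl⟩
    rw [map_zero, AlgHom.comp_apply]
    have e2 : scaleHom k V E s t c' (∑ a : E, (star k V E s t a * arrow k V E s t a
        - arrow k V E s t a * star k V E s t a))
        = ∑ a : E, ((((d (s a) : k))⁻¹) • (star k V E s t a * arrow k V E s t a)
            - ((((d (t a) : k))⁻¹) * q a) • (arrow k V E s t a * star k V E s t a)) := by
      rw [map_sum]
      refine Finset.sum_congr rfl fun a _ => ?_
      simp only [map_sub, map_mul, map_smul, scaleHom_arrow, scaleHom_star,
        mul_smul_comm, smul_mul_assoc, hc']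
      have hcoef : (((d (t a) : k))⁻¹) * q a = ((d (s a) : k))⁻¹ := by
        rw [hd a, mul_inv, mul_comm ((q a)⁻¹) _, mul_assoc, inv_mul_cancel₀ (hq a), mul_one]
      rw [hcoef]
    rw [e2]
    exact keyzero k V E s t (relq k V E s t q) q hzq (fun i => ((d i : k))⁻¹)
  refine ⟨AlgEquiv.ofAlgHom
    (RingQuot.liftAlgHom k ⟨(RingQuot.mkAlgHom k (rel1 k V E s t)).comp (scaleHom k V E s t c),
      hFcompat⟩)
    (RingQuot.liftAlgHom k ⟨(RingQuot.mkAlgHom k (relq k V E s t q)).comp (scaleHom k V E s t c'),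
      hGcompat⟩) ?_ ?_⟩
  · apply RingQuot.ringQuot_ext' k
    apply RingQuot.ringQuot_ext' k
    apply FreeAlgebra.hom_ext
    funext g
    simp only [Function.comp_apply, AlgHom.coe_comp, AlgHom.coe_id, id_eq,
      RingQuot.liftAlgHom_mkAlgHom_apply, AlgHom.comp_apply]
    rcases g with i | a | a
    · show RingQuot.mkAlgHom k (rel1 k V E s t)
        (scaleHom k V E s t c (scaleHom k V E s t c' (idem k V E s t i)))
        = RingQuot.mkAlgHom k (rel1 k V E s t) (idem k V E s t i)
      rw [scaleHom_idem, scaleHom_idem]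
    · show RingQuot.mkAlgHom k (rel1 k V E s t)
        (scaleHom k V E s t c (scaleHom k V E s t c' (arrow k V E s t a)))
        = RingQuot.mkAlgHom k (rel1 k V E s t) (arrow k V E s t a)
      rw [scaleHom_arrow, map_smul, scaleHom_arrow, smul_smul, hc, hc',
        inv_mul_cancel₀ (Units.ne_zero (d (s a))), one_smul]
    · show RingQuot.mkAlgHom k (rel1 k V E s t)
        (scaleHom k V E s t c (scaleHom k V E s t c' (star k V E s t a)))
        = RingQuot.mkAlgHom k (rel1 k V E s t) (star k V E s t a)
      rw [scaleHom_star, scaleHom_star]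
  · apply RingQuot.ringQuot_ext' k
    apply RingQuot.ringQuot_ext' k
    apply FreeAlgebra.hom_ext
    funext g
    simp only [Function.comp_apply, AlgHom.coe_comp, AlgHom.coe_id, id_eq,
      RingQuot.liftAlgHom_mkAlgHom_apply, AlgHom.comp_apply]
    rcases g with i | a | a
    · show RingQuot.mkAlgHom k (relq k V E s t q)
        (scaleHom k V E s t c' (scaleHom k V E s t c (idem k V E s t i)))
        = RingQuot.mkAlgHom k (relq k V E s t q) (idem k V E s t i)
      rw [scaleHom_idem, scaleHom_idem]
    · show RingQuot.mkAlgHom k (relq k V E s t q)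
        (scaleHom k V E s t c' (scaleHom k V E s t c (arrow k V E s t a)))
        = RingQuot.mkAlgHom k (relq k V E s t q) (arrow k V E s t a)
      rw [scaleHom_arrow, map_smul, scaleHom_arrow, smul_smul, hc, hc',
        mul_inv_cancel₀ (Units.ne_zero (d (s a))), one_smul]
    · show RingQuot.mkAlgHom k (relq k V E s t q)
        (scaleHom k V E s t c' (scaleHom k V E s t c (star k V E s t a)))
        = RingQuot.mkAlgHom k (relq k V E s t q) (star k V E s t a)
      rw [scaleHom_star, scaleHom_star]

end PPAux2

open PP in
/-- Let `Q` be a finite quiver whose underlying graph is a tree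
(so: the underlying simple graph is a tree, there are no loops, and no two
distinct arrows join the same pair of vertices), and let `q : Q₁ → k ∖ {0}`.
Then the generalized preprojective algebra
`Λ_{Q,q} = kQ̄/⟨Σ_α (α*α − q(α)·αα*)⟩` is isomorphic as a `k`-algebra to the
ordinary preprojective algebra `Λ_{Q,1} = kQ̄/⟨Σ_α (α*α − αα*)⟩`. -/
theorem statement2 (k V E : Type) [Field k] [Fintype V] [DecidableEq V] [Fintype E]
    (s t : E → V)
    (htree : (quiverGraph V E s t).IsTree)
    (hnoloop : ∀ a : E, s a ≠ t a)
    (hnomult : ∀ a b : E, (s a = s b ∧ t a = t b) ∨ (s a = t b ∧ t a = s b) → a = b)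
    (q : E → k) (hq : ∀ a : E, q a ≠ 0) :
    Nonempty
      ((RingQuot (fun x y : PathAlg k V E s t =>
          x = ∑ a : E, (star k V E s t a * arrow k V E s t a -
            q a • (arrow k V E s t a * star k V E s t a)) ∧ y = 0)) ≃ₐ[k]
       (RingQuot (fun x y : PathAlg k V E s t =>
          x = ∑ a : E, (star k V E s t a * arrow k V E s t a -
            arrow k V E s t a * star k V E s t a) ∧ y = 0))) := by
  classical
  obtain ⟨d, hd⟩ := PPAux.exists_d s t q hq htree hnoloop hnomult
  exact PPAux2.main_equiv k V E s t q hq d hd
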